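/- arXiv:1908.02251 — 5 statements merged into one kernel-verified Lean document; each statement's English description precedes it below -/
import Mathlib

section
/- For real numbers X > 0, Y > 0, L > 1 with XY > 1, the four quantities AB = XY(L−1)(Y²+1)(X²L+1) / [(X+Y)(XY−1)(XL+Y)(XYL−1)], CD = XY(L−1)(Y²L²+1)(X²L+1) / [(X+Y)(X+YL)(XYL−1)(XYL²−1)], BC = XY(L−1)(Y²L+1)(X²L²+1) / [(X+Y)(XL+Y)(XYL−1)(XYL²−1)], DA = XY(X²+1)(L−1)(Y²L+1) / [(X+Y)(XY−1)(X+YL)(XYL−1)] satisfy AB + CD = BC + DA. -/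
/-!
Once the six linear and bilinear factors of the denominators are known to be nonzero, the identity
is a polynomial identity after clearing denominators, valid over any field. Over `ℝ` they are
nonzero because `X * Y > 1` forces `X` and `Y` to have the same sign, and `L > 1`.
-/

theorem pitot_identity {K : Type*} [Field K] (X Y L : K) (h₁ : X + Y ≠ 0) (h₂ : X * Y - 1 ≠ 0)
    (h₃ : X * L + Y ≠ 0) (h₄ : X * Y * L - 1 ≠ 0) (h₅ : X + Y * L ≠ 0)
    (h₆ : X * Y * L ^ 2 - 1 ≠ 0) :
    X*Y*(L-1)*(Y^2+1)*(X^2*L+1) / ((X+Y)*(X*Y-1)*(X*L+Y)*(X*Y*L-1))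
      + X*Y*(L-1)*(Y^2*L^2+1)*(X^2*L+1) / ((X+Y)*(X+Y*L)*(X*Y*L-1)*(X*Y*L^2-1))
    = X*Y*(L-1)*(Y^2*L+1)*(X^2*L^2+1) / ((X+Y)*(X*L+Y)*(X*Y*L-1)*(X*Y*L^2-1))
      + X*Y*(X^2+1)*(L-1)*(Y^2*L+1) / ((X+Y)*(X*Y-1)*(X+Y*L)*(X*Y*L-1)) := by
  field_simp
  ring

theorem mul_add_ne_zero_of_mul_pos {X Y c : ℝ} (hc : 0 < c) (hXY : 0 < X * Y) :
    X * c + Y ≠ 0 := by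
  intro h
  rw [eq_neg_of_add_eq_zero_right h] at hXY
  nlinarith [mul_nonneg (sq_nonneg X) hc.le]

theorem stmt_4_general (X Y L : ℝ) (hL : 1 < L) (hXY : 1 < X * Y) :
    X*Y*(L-1)*(Y^2+1)*(X^2*L+1) / ((X+Y)*(X*Y-1)*(X*L+Y)*(X*Y*L-1))
      + X*Y*(L-1)*(Y^2*L^2+1)*(X^2*L+1) / ((X+Y)*(X+Y*L)*(X*Y*L-1)*(X*Y*L^2-1))
    = X*Y*(L-1)*(Y^2*L+1)*(X^2*L^2+1) / ((X+Y)*(X*L+Y)*(X*Y*L-1)*(X*Y*L^2-1))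
      + X*Y*(X^2+1)*(L-1)*(Y^2*L+1) / ((X+Y)*(X*Y-1)*(X+Y*L)*(X*Y*L-1)) := by
  have hXY₀ : 0 < X * Y := one_pos.trans hXY
  have hYX₀ : 0 < Y * X := by rwa [mul_comm]
  have hL₀ : 0 < L := one_pos.trans hL
  have hXYL : X * Y < X * Y * L := lt_mul_right hXY₀ hL
  have hXYL₂ : X * Y * L < X * Y * L ^ 2 := by nlinarith
  apply pitot_identity
  · simpa using mul_add_ne_zero_of_mul_pos one_pos hXY₀
  · linarith
  · exact mul_add_ne_zero_of_mul_pos hL₀ hXY₀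
  · linarith
  · simpa [add_comm] using mul_add_ne_zero_of_mul_pos hL₀ hYX₀
  · linarith

theorem stmt_4 (X Y L : ℝ) (hX : 0 < X) (hY : 0 < Y) (hL : 1 < L) (hXY : 1 < X * Y) :
    X*Y*(L-1)*(Y^2+1)*(X^2*L+1) / ((X+Y)*(X*Y-1)*(X*L+Y)*(X*Y*L-1))
      + X*Y*(L-1)*(Y^2*L^2+1)*(X^2*L+1) / ((X+Y)*(X+Y*L)*(X*Y*L-1)*(X*Y*L^2-1))
    = X*Y*(L-1)*(Y^2*L+1)*(X^2*L^2+1) / ((X+Y)*(X*L+Y)*(X*Y*L-1)*(X*Y*L^2-1))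
      + X*Y*(X^2+1)*(L-1)*(Y^2*L+1) / ((X+Y)*(X*Y-1)*(X+Y*L)*(X*Y*L-1)) :=
  stmt_4_general X Y L hL hXY
end

section
/- Let α, β, γ, δ ∈ (0, π) with α + β + γ + δ = 2π, and set t₁ = tan(α/2), t₂ = tan(β/2), t₄ = tan(δ/2). Then t₁t₂ + t₁t₄ + t₂t₄ − 1 = cos(γ/2) / (cos(α/2)·cos(β/2)·cos(δ/2)). In particular, t₁t₂ + t₁t₄ + t₂t₄ − 1 > 0. -/
open Real

theorem Real.cos_add_add_div_cos_mul_cos_mul_cos {a b d : ℝ}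
    (ha : cos a ≠ 0) (hb : cos b ≠ 0) (hd : cos d ≠ 0) :
    cos (a + b + d) / (cos a * cos b * cos d)
      = 1 - (tan a * tan b + tan a * tan d + tan b * tan d) := by
  simp only [cos_add, sin_add, tan_eq_sin_div_cos]
  field_simp
  ring

theorem Real.cos_half_pos {x : ℝ} (hx : x ∈ Set.Ioo 0 π) : 0 < cos (x / 2) :=
  cos_pos_of_mem_Ioo ⟨by linarith [hx.1, pi_pos], by linarith [hx.2]⟩

theorem stmt_9 (α β γ δ : ℝ)
    (hα : α ∈ Set.Ioo 0 Real.pi) (hβ : β ∈ Set.Ioo 0 Real.pi)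
    (hγ : γ ∈ Set.Ioo 0 Real.pi) (hδ : δ ∈ Set.Ioo 0 Real.pi)
    (hsum : α + β + γ + δ = 2 * Real.pi) :
    Real.tan (α/2) * Real.tan (β/2) + Real.tan (α/2) * Real.tan (δ/2)
        + Real.tan (β/2) * Real.tan (δ/2) - 1
      = Real.cos (γ/2) / (Real.cos (α/2) * Real.cos (β/2) * Real.cos (δ/2)) ∧
    0 < Real.tan (α/2) * Real.tan (β/2) + Real.tan (α/2) * Real.tan (δ/2)
        + Real.tan (β/2) * Real.tan (δ/2) - 1 := by
  have hγ_half : cos (γ / 2) = -cos (α / 2 + β / 2 + δ / 2) := by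
    rw [show γ / 2 = π - (α / 2 + β / 2 + δ / 2) by linarith, cos_pi_sub]
  have heq : tan (α/2) * tan (β/2) + tan (α/2) * tan (δ/2) + tan (β/2) * tan (δ/2) - 1
      = cos (γ/2) / (cos (α/2) * cos (β/2) * cos (δ/2)) := by
    rw [hγ_half, neg_div, cos_add_add_div_cos_mul_cos_mul_cos (cos_half_pos hα).ne'
      (cos_half_pos hβ).ne' (cos_half_pos hδ).ne']
    ring
  refine ⟨heq, heq ▸ div_pos (cos_half_pos hγ) ?_⟩
  exact mul_pos (mul_pos (cos_half_pos hα) (cos_half_pos hβ)) (cos_half_pos hδ)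
end

section
/- Let X > 0, Y > 0, L > 1 with XY > 1, and define t₁ = (XY−1)/(X+Y), t₂ = (XL+Y)/(XYL−1), t₄ = (X+YL)/(XYL−1). Then X satisfies the quadratic equation X² − [(2t₁ + t₂ − t₄ − t₁²(t₂+t₄))/(1 − t₁t₂)]·X − 1 = 0, provided 1 − t₁t₂ ≠ 0. -/
/-! The coefficient of the linear term simplifies to `X - X⁻¹`, so the quadratic factors as
`(x - X)(x + X⁻¹)` and has `X` as a root. -/

theorem halfAngle_ratio_eq_sub_inv {K : Type*} [Field K] {X Y L t₁ t₂ t₄ : K}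
    (hX : X ≠ 0) (hXY : X + Y ≠ 0) (hXYL : X * Y * L - 1 ≠ 0)
    (h1 : t₁ = (X*Y - 1)/(X + Y))
    (h2 : t₂ = (X*L + Y)/(X*Y*L - 1))
    (h4 : t₄ = (X + Y*L)/(X*Y*L - 1))
    (hne : 1 - t₁*t₂ ≠ 0) :
    (2*t₁ + t₂ - t₄ - t₁^2*(t₂ + t₄))/(1 - t₁*t₂) = X - X⁻¹ := by
  rw [div_eq_iff hne]
  subst h1 h2 h4
  field_simp
  ring

theorem stmt_10_general (X Y L : ℝ) (hX : 0 < X) (hL : 1 < L) (hXY : 1 < X * Y)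
    (t₁ t₂ t₄ : ℝ)
    (h1 : t₁ = (X*Y - 1)/(X + Y))
    (h2 : t₂ = (X*L + Y)/(X*Y*L - 1))
    (h4 : t₄ = (X + Y*L)/(X*Y*L - 1))
    (hne : 1 - t₁*t₂ ≠ 0) :
    X^2 - (2*t₁ + t₂ - t₄ - t₁^2*(t₂ + t₄))/(1 - t₁*t₂) * X - 1 = 0 := by
  have hY : 0 < Y := pos_of_mul_pos_right (one_pos.trans hXY) hX.le
  have hXYL : X * Y * L - 1 ≠ 0 := by nlinarith
  rw [halfAngle_ratio_eq_sub_inv hX.ne' (by positivity) hXYL h1 h2 h4 hne]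
  field_simp
  ring

theorem stmt_10 (X Y L : ℝ) (hX : 0 < X) (hY : 0 < Y) (hL : 1 < L) (hXY : 1 < X * Y)
    (t₁ t₂ t₄ : ℝ)
    (h1 : t₁ = (X*Y - 1)/(X + Y))
    (h2 : t₂ = (X*L + Y)/(X*Y*L - 1))
    (h4 : t₄ = (X + Y*L)/(X*Y*L - 1))
    (hne : 1 - t₁*t₂ ≠ 0) :
    X^2 - (2*t₁ + t₂ - t₄ - t₁^2*(t₂ + t₄))/(1 - t₁*t₂) * X - 1 = 0 :=
  stmt_10_general X Y L hX hL hXY t₁ t₂ t₄ h1 h2 h4 hne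
end

section
/- Let a > 1 and let T(x,y) = (a^x(a^{2y}−1)/((a^x+a^y)(a^{x+y}−1)), 2a^{x+y}/((a^x+a^y)(a^{x+y}−1))) be defined on the half-plane x + y > 0. Then T is injective on this half-plane. -/
/-! With `X = a^x`, `Y = a^y` and `(u, v) = T(x, y)`, the denominator splits as
`(X + Y)(XY - 1) = X(Y² - 1) + Y(X² - 1)`, so `1 - u = Y(X² - 1)/((X + Y)(XY - 1))`. Hence
`u / v = (Y - Y⁻¹)/2 = sinh (y log a)` and `(1 - u)/v = (X - X⁻¹)/2 = sinh (x log a)`,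
and `(x, y)` is recovered from `(u, v)` because `sinh` is injective. -/

open Real Set Function

noncomputable section

def ratMap (X Y : ℝ) : ℝ × ℝ :=
  (X * (Y ^ 2 - 1) / ((X + Y) * (X * Y - 1)), 2 * (X * Y) / ((X + Y) * (X * Y - 1)))

def ratioCoords (p : ℝ × ℝ) : ℝ × ℝ :=
  ((1 - p.1) / p.2, p.1 / p.2)

end

lemma ratioCoords_ratMap {X Y : ℝ} (hX : X ≠ 0) (hY : Y ≠ 0)
    (hD : (X + Y) * (X * Y - 1) ≠ 0) :
    ratioCoords (ratMap X Y) = ((X - X⁻¹) / 2, (Y - Y⁻¹) / 2) := by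
  have hsplit : 1 - X * (Y ^ 2 - 1) / ((X + Y) * (X * Y - 1)) =
      Y * (X ^ 2 - 1) / ((X + Y) * (X * Y - 1)) := by
    rw [eq_div_iff hD, sub_mul, div_mul_cancel₀ _ hD]
    ring
  simp only [ratioCoords, ratMap, hsplit, div_div_div_cancel_right₀ hD, Prod.mk.injEq]
  constructor <;> field_simp

lemma rpow_sub_inv_rpow {a : ℝ} (ha : 0 < a) (x : ℝ) :
    (a ^ x - (a ^ x)⁻¹) / 2 = sinh (log a * x) := by
  rw [rpow_def_of_pos ha, sinh_eq, exp_neg]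

lemma rpow_mul_rpow_sub_one_ne_zero {a x y : ℝ} (ha : 1 < a) (hxy : 0 < x + y) :
    a ^ x * a ^ y - 1 ≠ 0 := by
  rw [← rpow_add (by linarith)]
  exact sub_ne_zero.mpr (one_lt_rpow ha hxy).ne'

theorem stmt_17 (a : ℝ) (ha : 1 < a)
    (T : ℝ × ℝ → ℝ × ℝ)
    (hT : ∀ x y : ℝ, T (x, y) =
      (a ^ x * (a ^ (2*y) - 1) / ((a ^ x + a ^ y) * (a ^ (x + y) - 1)),
       2 * a ^ (x + y) / ((a ^ x + a ^ y) * (a ^ (x + y) - 1)))) :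
    Set.InjOn T {p : ℝ × ℝ | 0 < p.1 + p.2} := by
  have ha0 : 0 < a := by linarith
  have hT' : ∀ x y : ℝ, T (x, y) = ratMap (a ^ x) (a ^ y) := fun x y => by
    rw [hT, ratMap, two_mul y, rpow_add ha0, rpow_add ha0, sq]
  have hsinh : EqOn (ratioCoords ∘ T)
      (Prod.map (fun x => sinh (log a * x)) (fun y => sinh (log a * y)))
      {p : ℝ × ℝ | 0 < p.1 + p.2} := by
    rintro ⟨x, y⟩ (hxy : 0 < x + y)
    have hX := rpow_pos_of_pos ha0 x
    have hY := rpow_pos_of_pos ha0 y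
    rw [comp_apply, hT', ratioCoords_ratMap hX.ne' hY.ne'
      (mul_ne_zero (by linarith) (rpow_mul_rpow_sub_one_ne_zero ha hxy)),
      rpow_sub_inv_rpow ha0, rpow_sub_inv_rpow ha0, Prod.map_apply]
  have hinj : Injective fun x => sinh (log a * x) :=
    sinh_injective.comp (mul_right_injective₀ (log_pos ha).ne')
  exact InjOn.of_comp ((hinj.prodMap hinj).injOn.congr hsinh.symm)
end

section
/- For real numbers X > 0, Y > 0, L > 1 with XY > 1, define t₁ = (XY−1)/(X+Y), t₂ = (XL+Y)/(XYL−1), t₃ = (XYL²−1)/(L(X+Y)), t₄ = (X+YL)/(XYL−1). Then t₁ + t₂ + t₃ + t₄ = t₁t₂t₃ + t₁t₂t₄ + t₁t₃t₄ + t₂t₃t₄. -/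
/-- `e₁ - e₃` of four half-angle tangents is the numerator of the tangent of the sum of the
half-angles, so this is the condition `∠A' + ∠B' + ∠C' + ∠D' = 2π`; once the denominators
`X + Y`, `L` and `X * Y * L - 1` are cleared it is a polynomial identity. -/
theorem sum_eq_sum_triple_products_of_half_angle_tangents {K : Type*} [Field K] {X Y L : K}
    (hXY : X + Y ≠ 0) (hL : L ≠ 0) (hXYL : X * Y * L - 1 ≠ 0) {t₁ t₂ t₃ t₄ : K}
    (h1 : t₁ = (X*Y - 1)/(X + Y))
    (h2 : t₂ = (X*L + Y)/(X*Y*L - 1))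
    (h3 : t₃ = (X*Y*L^2 - 1)/(L*(X + Y)))
    (h4 : t₄ = (X + Y*L)/(X*Y*L - 1)) :
    t₁ + t₂ + t₃ + t₄ = t₁*t₂*t₃ + t₁*t₂*t₄ + t₁*t₃*t₄ + t₂*t₃*t₄ := by
  subst h1 h2 h3 h4
  field_simp
  ring

theorem stmt_19_general (X Y L : ℝ) (hL : 1 < L) (hXY : 1 < X * Y)
    (t₁ t₂ t₃ t₄ : ℝ)
    (h1 : t₁ = (X*Y - 1)/(X + Y))
    (h2 : t₂ = (X*L + Y)/(X*Y*L - 1))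
    (h3 : t₃ = (X*Y*L^2 - 1)/(L*(X + Y)))
    (h4 : t₄ = (X + Y*L)/(X*Y*L - 1)) :
    t₁ + t₂ + t₃ + t₄ = t₁*t₂*t₃ + t₁*t₂*t₄ + t₁*t₃*t₄ + t₂*t₃*t₄ := by
  have hsum : X + Y ≠ 0 := by
    intro h
    obtain rfl : Y = -X := by linarith
    nlinarith [sq_nonneg X]
  have hXYL : X * Y * L - 1 ≠ 0 := by nlinarith
  exact sum_eq_sum_triple_products_of_half_angle_tangents hsum (by positivity) hXYL h1 h2 h3 h4

theorem stmt_19 (X Y L : ℝ) (hX : 0 < X) (hY : 0 < Y) (hL : 1 < L) (hXY : 1 < X * Y)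
    (t₁ t₂ t₃ t₄ : ℝ)
    (h1 : t₁ = (X*Y - 1)/(X + Y))
    (h2 : t₂ = (X*L + Y)/(X*Y*L - 1))
    (h3 : t₃ = (X*Y*L^2 - 1)/(L*(X + Y)))
    (h4 : t₄ = (X + Y*L)/(X*Y*L - 1)) :
    t₁ + t₂ + t₃ + t₄ = t₁*t₂*t₃ + t₁*t₂*t₄ + t₁*t₃*t₄ + t₂*t₃*t₄ :=
  stmt_19_general X Y L hL hXY t₁ t₂ t₃ t₄ h1 h2 h3 h4
end
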